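/- arXiv:1711.08846 — 4 statements merged into one kernel-verified Lean document; each statement's English description precedes it below -/
import Mathlib

section
/- Let B be a unital C*-algebra and L a seminorm (possibly taking value +∞) on the self-adjoint part of B whose domain { a = a* : L(a) < ∞ } is dense in the self-adjoint part of B. Let D ∈ [0,∞]. If mk_L(μ,ν) ≤ D for all pure states μ, ν on B, then mk_L(μ,ν) ≤ D for all states μ, ν on B. -/
open scoped ENNReal

section Defs

variable {X : Type*} [MetricSpace X] [CompactSpace X]
variable {A : Type*} [NormedRing A] [StarRing A] [CStarRing A]
  [NormedAlgebra ℂ A] [StarModule ℂ A] [CompleteSpace A]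

/-- `nn` is a norm on `A` over `ℝ` (in particular, any norm over `ℂ` qualifies). -/
def IsNormOn (A : Type*) [NormedRing A] [NormedAlgebra ℂ A] (nn : A → ℝ) : Prop :=
  (∀ x, 0 ≤ nn x) ∧ (∀ x, nn x = 0 ↔ x = 0) ∧
    (∀ x y, nn (x + y) ≤ nn x + nn y) ∧ ∀ (r : ℝ) (x : A), nn ((r : ℂ) • x) = |r| * nn x

/-- The Lipschitz-type quantity `l^{(n)}_{d_X}` on `C(X, A)`, valued in `[0,∞]`. -/
noncomputable def lipn (nn : A → ℝ) (a : C(X, A)) : ℝ≥0∞ :=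
  ⨆ (p : X × X) (_ : p.1 ≠ p.2),
    ENNReal.ofReal (nn (a p.1 - a p.2) / dist p.1 p.2)

/-- The quotient norm of `C(X,A)/C(X, ℂ1_A)`. -/
noncomputable def quotCXA (a : C(X, A)) : ℝ :=
  sInf { r : ℝ | ∃ b : C(X, A), (∀ x, ∃ c : ℂ, b x = c • (1 : A)) ∧ r = ‖a - b‖ }

/-- The quotient norm of `C(X,A)/ℂ1_{C(X,A)}`. -/
noncomputable def quotC (a : C(X, A)) : ℝ :=
  ⨅ c : ℂ, ‖a - c • (1 : C(X, A))‖

/-- The seminorm `L^{(n),C(X)}`. -/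
noncomputable def LCXn (nn : A → ℝ) (a : C(X, A)) : ℝ≥0∞ :=
  max (lipn nn a) (ENNReal.ofReal (quotCXA a))

/-- The seminorm `L^{(n),ℂ}`. -/
noncomputable def LCn (nn : A → ℝ) (a : C(X, A)) : ℝ≥0∞ :=
  max (lipn nn a) (ENNReal.ofReal (quotC a))

/-- The seminorm `L^{(n),μ}`. -/
noncomputable def Lmun (nn : A → ℝ) (μ : C(X, A) →L[ℂ] ℂ) (a : C(X, A)) : ℝ≥0∞ :=
  max (lipn nn a) (ENNReal.ofReal ‖a - μ a • (1 : C(X, A))‖)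

end Defs

/-- A state on a unital C*-algebra: a continuous linear functional sending `1` to `1`
and `star b * b` to a nonnegative real for every `b`. -/
def IsState {B : Type*} [NormedRing B] [NormedAlgebra ℂ B] [StarRing B]
    (φ : B →L[ℂ] ℂ) : Prop :=
  φ 1 = 1 ∧ ∀ b : B, 0 ≤ (φ (star b * b)).re ∧ (φ (star b * b)).im = 0

/-- A pure state: an extreme point of the state space. -/
def IsPureState {B : Type*} [NormedRing B] [NormedAlgebra ℂ B] [StarRing B]
    (φ : B →L[ℂ] ℂ) : Prop :=
  φ ∈ Set.extremePoints ℝ { ψ : B →L[ℂ] ℂ | IsState ψ }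

/-- The Monge–Kantorovich distance associated to a `[0,∞]`-valued seminorm `L`. -/
noncomputable def mkDist {B : Type*} [NormedRing B] [NormedAlgebra ℂ B] [StarRing B]
    (L : B → ℝ≥0∞) (φ ψ : B →L[ℂ] ℂ) : ℝ≥0∞ :=
  ⨆ (a : B) (_ : IsSelfAdjoint a ∧ L a ≤ 1), ENNReal.ofReal ‖φ a - ψ a‖

/-!
The state space is a weak-* compact convex set whose extreme points are the pure states, so by
Krein–Milman it is the closed convex hull of the pure states. Fix a self-adjoint `a` with
`L a ≤ 1`. Evaluation at `a` is a continuous real-linear map, so it sends the closed convex hull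
of the pure states into the closed convex hull of their values; taking convex hulls and closures
does not change diameters, hence `|μ a - ν a|` is at most the diameter of the values of pure
states at `a`, which is at most `D`.
-/

open Metric
open scoped ComplexOrder

section KreinMilman

variable {E F : Type*} [AddCommGroup E] [Module ℝ E] [TopologicalSpace E] [T2Space E]
  [IsTopologicalAddGroup E] [ContinuousSMul ℝ E] [LocallyConvexSpace ℝ E]
  [SeminormedAddCommGroup F] [NormedSpace ℝ F]

theorem ContinuousLinearMap.ediam_image_extremePoints (f : E →L[ℝ] F) {s : Set E}
    (hs : IsCompact s) (hconv : Convex ℝ s) :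
    ediam (f '' s.extremePoints ℝ) = ediam (f '' s) := by
  refine le_antisymm (ediam_mono (Set.image_mono extremePoints_subset)) ?_
  calc ediam (f '' s)
      = ediam (f '' closure (convexHull ℝ (s.extremePoints ℝ))) := by
        rw [closure_convexHull_extremePoints hs hconv]
    _ ≤ ediam (closure (f '' convexHull ℝ (s.extremePoints ℝ))) :=
        ediam_mono (image_closure_subset_closure_image f.continuous)
    _ = ediam (f '' s.extremePoints ℝ) := by
        rw [ediam_closure, ← convexHull_ediam (f '' s.extremePoints ℝ)]
        exact congrArg ediam ((f : E →ₗ[ℝ] F).image_convexHull _)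

end KreinMilman

namespace IsState

variable {B : Type*} [NormedRing B] [StarRing B] [NormedAlgebra ℂ B] {φ : B →L[ℂ] ℂ}

lemma map_nonneg_of_mem_closure (hφ : IsState φ) {y : B}
    (hy : y ∈ AddSubmonoid.closure (Set.range fun b : B => star b * b)) : 0 ≤ φ y := by
  induction hy using AddSubmonoid.closure_induction with
  | mem _ h =>
    obtain ⟨b, rfl⟩ := h
    exact Complex.nonneg_iff.2 ⟨(hφ.2 b).1, (hφ.2 b).2.symm⟩
  | zero => simp
  | add _ _ _ _ h₁ h₂ => rw [map_add]; exact add_nonneg h₁ h₂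

lemma map_algebraMap (hφ : IsState φ) (r : ℝ) : φ (algebraMap ℝ B r) = r := by
  rw [Algebra.algebraMap_eq_smul_one, ← Complex.coe_smul, map_smul, hφ.1, smul_eq_mul, mul_one]

variable [CStarRing B] [StarModule ℂ B] [CompleteSpace B]

lemma norm_apply_le_of_isSelfAdjoint (hφ : IsState φ) {x : B} (hx : IsSelfAdjoint x) :
    ‖φ x‖ ≤ ‖x‖ := by
  let : CStarAlgebra B := { }
  let := CStarAlgebra.spectralOrder B
  have := CStarAlgebra.spectralOrderedRing B
  have map_nonneg {z : B} (hz : 0 ≤ z) : 0 ≤ φ z :=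
    hφ.map_nonneg_of_mem_closure (StarOrderedRing.nonneg_iff.mp hz)
  have upper : φ x ≤ ‖x‖ := by
    simpa [hφ.map_algebraMap] using map_nonneg (sub_nonneg.2 hx.le_algebraMap_norm_self)
  have lower : -(‖x‖ : ℂ) ≤ φ x := by
    simpa [hφ.map_algebraMap, neg_le_iff_add_nonneg] using
      map_nonneg (sub_nonneg.2 hx.neg_algebraMap_norm_le_self)
  obtain ⟨hre, him⟩ := Complex.le_def.1 upper
  rw [← Complex.abs_re_eq_norm.2 (by simpa using him)]
  exact abs_le.2 ⟨by simpa using (Complex.le_def.1 lower).1, by simpa using hre⟩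

lemma norm_le_two (hφ : IsState φ) : ‖φ‖ ≤ 2 := by
  refine φ.opNorm_le_bound zero_le_two fun b => ?_
  calc ‖φ b‖ = ‖φ (realPart b) + Complex.I * φ (imaginaryPart b)‖ := by
        conv_lhs => rw [← realPart_add_I_smul_imaginaryPart b]
        rw [map_add, map_smul, smul_eq_mul]
    _ ≤ ‖realPart b‖ + ‖imaginaryPart b‖ := by
        refine (norm_add_le _ _).trans ?_
        rw [norm_mul, Complex.norm_I, one_mul]
        exact add_le_add (hφ.norm_apply_le_of_isSelfAdjoint (realPart b).2)
          (hφ.norm_apply_le_of_isSelfAdjoint (imaginaryPart b).2)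
    _ ≤ 2 * ‖b‖ := by
        linarith [realPart.norm_le b, imaginaryPart.norm_le b]

end IsState

namespace WeakDual

instance instLocallyConvexSpaceReal {E : Type*} [AddCommGroup E] [Module ℂ E]
    [TopologicalSpace E] : LocallyConvexSpace ℝ (WeakDual ℂ E) :=
  WeakBilin.locallyConvexSpace

variable {E : Type*} [NormedAddCommGroup E] [NormedSpace ℂ E]

noncomputable def evalRealCLM (x : E) : WeakDual ℂ E →L[ℝ] ℂ :=
  (WeakBilin.eval (topDualPairing ℂ E) x).restrictScalars ℝ

@[simp]
lemma evalRealCLM_apply (x : E) (φ : WeakDual ℂ E) : evalRealCLM x φ = φ x := rfl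

end WeakDual

section StateSpace

open WeakDual

variable (B : Type*) [NormedRing B] [StarRing B] [NormedAlgebra ℂ B]

def stateSpace : Set (WeakDual ℂ B) := {φ | IsState (φ : B →L[ℂ] ℂ)}

-- Under `ComplexOrder`, `Set.Ici (0 : ℂ)` is the ray of nonnegative reals.
lemma stateSpace_eq : stateSpace B = evalRealCLM 1 ⁻¹' {1} ∩
    ⋂ b : B, evalRealCLM (star b * b) ⁻¹' Set.Ici 0 := by
  ext φ
  simp only [stateSpace, IsState, Set.mem_ofPred_eq, Set.mem_inter_iff, Set.mem_preimage,
    Set.mem_iInter, Set.mem_Ici, Set.mem_singleton_iff, evalRealCLM_apply, Complex.nonneg_iff,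
    eq_comm (a := (0 : ℝ))]
  rfl

lemma convex_stateSpace : Convex ℝ (stateSpace B) := by
  rw [stateSpace_eq]
  exact ((convex_singleton 1).linear_preimage _).inter
    (convex_iInter fun b => (convex_Ici 0).linear_preimage _)

lemma isClosed_stateSpace : IsClosed (stateSpace B) := by
  rw [stateSpace_eq]
  exact (isClosed_singleton.preimage (ContinuousLinearMap.continuous _)).inter
    (isClosed_iInter fun b => isClosed_Ici.preimage (ContinuousLinearMap.continuous _))

variable [CStarRing B] [StarModule ℂ B] [CompleteSpace B]

lemma isCompact_stateSpace : IsCompact (stateSpace B) :=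
  (WeakDual.isCompact_closedBall 0 2).of_isClosed_subset (isClosed_stateSpace B)
    fun _ hφ => mem_closedBall_zero_iff.2 (IsState.norm_le_two hφ)

end StateSpace

lemma edist_apply_le_mkDist {B : Type*} [NormedRing B] [NormedAlgebra ℂ B] [StarRing B]
    (L : B → ℝ≥0∞) (φ ψ : B →L[ℂ] ℂ) {a : B} (ha : IsSelfAdjoint a) (hLa : L a ≤ 1) :
    edist (φ a) (ψ a) ≤ mkDist L φ ψ := by
  rw [edist_dist, dist_eq_norm]
  exact le_iSup₂ (f := fun a (_ : IsSelfAdjoint a ∧ L a ≤ 1) => ENNReal.ofReal ‖φ a - ψ a‖)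
    a ⟨ha, hLa⟩

theorem statement7_general
    (B : Type*) [NormedRing B] [StarRing B] [CStarRing B]
      [NormedAlgebra ℂ B] [StarModule ℂ B] [CompleteSpace B]
    (L : B → ℝ≥0∞)
    (D : ℝ≥0∞)
    (hpure : ∀ μ ν : B →L[ℂ] ℂ, IsPureState μ → IsPureState ν → mkDist L μ ν ≤ D) :
    ∀ μ ν : B →L[ℂ] ℂ, IsState μ → IsState ν → mkDist L μ ν ≤ D := by
  intro μ ν hμ hν
  refine iSup₂_le fun a ⟨ha, hLa⟩ => ?_
  let f := WeakDual.evalRealCLM a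
  have hpure_a : ediam (f '' (stateSpace B).extremePoints ℝ) ≤ D := by
    refine ediam_le ?_
    rintro _ ⟨p, hp, rfl⟩ _ ⟨q, hq, rfl⟩
    exact (edist_apply_le_mkDist L p q ha hLa).trans (hpure p q hp hq)
  calc ENNReal.ofReal ‖μ a - ν a‖ = edist (f μ) (f ν) := by rw [edist_dist, dist_eq_norm]; rfl
    _ ≤ ediam (f '' stateSpace B) := edist_le_ediam_of_mem ⟨μ, hμ, rfl⟩ ⟨ν, hν, rfl⟩
    _ = ediam (f '' (stateSpace B).extremePoints ℝ) :=
        (f.ediam_image_extremePoints (isCompact_stateSpace B) (convex_stateSpace B)).symm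
    _ ≤ D := hpure_a

/-- if the Monge–Kantorovich distance of a densely-defined seminorm `L`
is bounded by `D` on pure states, then it is bounded by `D` on all states. -/
theorem statement7
    (B : Type*) [NormedRing B] [StarRing B] [CStarRing B]
      [NormedAlgebra ℂ B] [StarModule ℂ B] [CompleteSpace B]
    (L : B → ℝ≥0∞)
    (hL0 : L 0 = 0)
    (hLadd : ∀ a b : B, IsSelfAdjoint a → IsSelfAdjoint b → L (a + b) ≤ L a + L b)
    (hLsmul : ∀ (r : ℝ) (a : B), IsSelfAdjoint a →
      L ((r : ℂ) • a) = ENNReal.ofReal |r| * L a)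
    (hdense : ∀ a : B, IsSelfAdjoint a → ∀ ε : ℝ, 0 < ε →
      ∃ b : B, IsSelfAdjoint b ∧ L b < ⊤ ∧ ‖a - b‖ < ε)
    (D : ℝ≥0∞)
    (hpure : ∀ μ ν : B →L[ℂ] ℂ, IsPureState μ → IsPureState ν → mkDist L μ ν ≤ D) :
    ∀ μ ν : B →L[ℂ] ℂ, IsState μ → IsState ν → mkDist L μ ν ≤ D :=
  statement7_general B L D hpure
end

section
/- Let (X, d_X) be a compact metric space, A a finite-dimensional unital C*-algebra, ‖·‖_n a norm on A equivalent to the C*-norm, and L any of the seminorms L^{(n),C(X)}, L^{(n),ℂ}, or L^{(n),μ} (μ a state on C(X,A)). Then for every D > 0, the set { a ∈ C(X,A) : a = a*, L(a) ≤ 1, ‖a‖_{C(X,A)} ≤ D } is totally bounded in C(X,A) with respect to the supremum norm. -/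
open scoped ENNReal

/-
Since `‖·‖_n` dominates the C*-norm up to the factor `N`, `L a ≤ 1` makes `a` `N`-Lipschitz, and
`‖a‖ ≤ D` keeps its values in the closed `D`-ball of `A`, which is compact because `A` is
finite-dimensional. The set is therefore equicontinuous and pointwise relatively compact, hence
totally bounded by Arzelà–Ascoli.
-/

theorem ContinuousMap.totallyBounded_of_equicontinuous {X β : Type*} [TopologicalSpace X]
    [CompactSpace X] [MetricSpace β] {S : Set C(X, β)} {K : Set β} (hK : IsCompact K)
    (hSK : ∀ f ∈ S, ∀ x, f x ∈ K) (hS : Equicontinuous ((↑) : S → X → β)) :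
    TotallyBounded S := by
  set e := ContinuousMap.isometryEquivBoundedOfCompact X β
  have hmem : ∀ g ∈ e '' S, e.symm g ∈ S := by
    rintro _ ⟨f, hf, rfl⟩
    simpa using hf
  have he : Equicontinuous ((↑) : e '' S → X → β) :=
    hS.comp fun g : e '' S => ⟨e.symm g, hmem g g.2⟩
  have hbdd : TotallyBounded (e '' S) :=
    (BoundedContinuousFunction.arzela_ascoli K hK (e '' S)
      (by rintro _ x ⟨f, hf, rfl⟩; exact hSK f hf x) he).totallyBounded.subset subset_closure
  simpa [e.injective.preimage_image] using
    totallyBounded_preimage e.isometry.isUniformInducing hbdd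

section lipn

variable {X A : Type*} [MetricSpace X] [NormedRing A] {nn : A → ℝ} {a : C(X, A)}

theorem nn_sub_le_dist_of_lipn_le_one (h : lipn nn a ≤ 1) {x y : X} (hxy : x ≠ y) :
    nn (a x - a y) ≤ dist x y := by
  have hq : ENNReal.ofReal (nn (a x - a y) / dist x y) ≤ 1 :=
    (le_iSup₂ (α := ℝ≥0∞) (x, y) hxy).trans h
  exact (div_le_one (dist_pos.2 hxy)).1 (ENNReal.ofReal_le_one.1 hq)

theorem dist_le_mul_of_lipn_le_one {N : ℝ} (hN : 0 ≤ N) (hnorm : ∀ z : A, ‖z‖ ≤ N * nn z)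
    (h : lipn nn a ≤ 1) (x y : X) : dist (a x) (a y) ≤ N * dist x y := by
  rcases eq_or_ne x y with rfl | hxy
  · simp
  calc dist (a x) (a y) = ‖a x - a y‖ := dist_eq_norm _ _
    _ ≤ N * nn (a x - a y) := hnorm _
    _ ≤ N * dist x y := mul_le_mul_of_nonneg_left (nn_sub_le_dist_of_lipn_le_one h hxy) hN

end lipn

theorem statement10_general
    (X : Type*) [MetricSpace X] [CompactSpace X]
    (A : Type*) [NormedRing A] [StarRing A] [CStarRing A]
      [NormedAlgebra ℂ A] [StarModule ℂ A] [CompleteSpace A]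
    [FiniteDimensional ℂ A]
    (nn : A → ℝ) (M N : ℝ) (hN : 0 < N)
    (hMN : ∀ x : A, M * nn x ≤ ‖x‖ ∧ ‖x‖ ≤ N * nn x)
    (L : C(X, A) → ℝ≥0∞)
    (hL : L = LCXn nn ∨ L = LCn nn ∨ ∃ μ : C(X, A) →L[ℂ] ℂ, IsState μ ∧ L = Lmun nn μ) :
    ∀ D : ℝ, 0 < D →
      TotallyBounded { a : C(X, A) | IsSelfAdjoint a ∧ L a ≤ 1 ∧ ‖a‖ ≤ D } := by
  intro D _
  have hlip : ∀ a, lipn nn a ≤ L a := by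
    rcases hL with rfl | rfl | ⟨μ, -, rfl⟩ <;> exact fun a => le_max_left _ _
  refine ContinuousMap.totallyBounded_of_equicontinuous (isCompact_closedBall (0 : A) D) ?_ ?_
  · rintro a ⟨-, -, ha⟩ x
    exact mem_closedBall_zero_iff.2 ((a.norm_coe_le_norm x).trans ha)
  · refine Metric.equicontinuous_of_continuity_modulus (N * ·) ?_ _ ?_
    · simpa using (continuous_const_mul N).tendsto 0
    · rintro x y ⟨a, -, haL, -⟩
      exact dist_le_mul_of_lipn_le_one hN.le (fun z => (hMN z).2) ((hlip a).trans haL) x y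

/-- if `A` is finite-dimensional, then for any of the seminorms
`L^{(n),C(X)}`, `L^{(n),ℂ}`, `L^{(n),μ}`, the set of self-adjoint elements `a` with
`L a ≤ 1` and `‖a‖ ≤ D` is totally bounded. -/
theorem statement10
    (X : Type*) [MetricSpace X] [CompactSpace X]
    (A : Type*) [NormedRing A] [StarRing A] [CStarRing A]
      [NormedAlgebra ℂ A] [StarModule ℂ A] [CompleteSpace A]
    [FiniteDimensional ℂ A]
    (nn : A → ℝ) (hnn : IsNormOn A nn) (M N : ℝ) (hM : 0 < M) (hN : 0 < N)
    (hMN : ∀ x : A, M * nn x ≤ ‖x‖ ∧ ‖x‖ ≤ N * nn x)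
    (L : C(X, A) → ℝ≥0∞)
    (hL : L = LCXn nn ∨ L = LCn nn ∨ ∃ μ : C(X, A) →L[ℂ] ℂ, IsState μ ∧ L = Lmun nn μ) :
    ∀ D : ℝ, 0 < D →
      TotallyBounded { a : C(X, A) | IsSelfAdjoint a ∧ L a ≤ 1 ∧ ‖a‖ ≤ D } :=
  statement10_general X A nn M N hN hMN L hL
end

section
/- Let (X, d_X) be a compact metric space and A a finite-dimensional unital C*-algebra. Let ‖·‖_n and ‖·‖_m be norms on A (over ℝ or ℂ), and let q and p each be one of the choices C(X), ℂ, or a state μ on C(X,A). Then the seminorms L^{(n),q} and L^{(m),p} are equivalent: there exist constants c, C > 0 such that c·L^{(n),q}(a) ≤ L^{(m),p}(a) ≤ C·L^{(n),q}(a) for all self-adjoint a ∈ C(X,A) (as inequalities in [0,∞]). -/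
open scoped ENNReal

/-!
Every seminorm in question is squeezed between `L^{(n),C(X)}` and a constant multiple of it.
Passing from `C(X, ℂ1_A)` to the constants costs at most the oscillation of `a`, which is
bounded by `diam X` times its Lipschitz constant; passing from the constants to
`μ(a) 1` costs the norm of the projection `a ↦ a - μ(a) 1`, which kills `1`. Finally the
Lipschitz constants for two norms on the finite-dimensional `A` are comparable because all
norms on `A` are equivalent.
-/

section NormEquivalence

variable {A : Type*} [NormedRing A] [NormedAlgebra ℂ A] {nn mm : A → ℝ}

noncomputable def IsNormOn.toSeminorm (h : IsNormOn A nn) : Seminorm ℝ A :=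
  Seminorm.of nn h.2.2.1 fun r x => by rw [← Complex.coe_smul, h.2.2.2, Real.norm_eq_abs]

@[simp]
lemma IsNormOn.coe_toSeminorm (h : IsNormOn A nn) : ⇑h.toSeminorm = nn := rfl

variable [FiniteDimensional ℂ A]

lemma IsNormOn.continuous (h : IsNormOn A nn) : Continuous nn :=
  h.toSeminorm.convexOn.locallyLipschitz.continuous

lemma IsNormOn.exists_le_mul_norm (h : IsNormOn A nn) :
    ∃ K, 0 < K ∧ ∀ v, nn v ≤ K * ‖v‖ :=
  h.toSeminorm.bound_of_continuous_normedSpace h.continuous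

lemma IsNormOn.exists_norm_le_mul (h : IsNormOn A nn) :
    ∃ K, 0 < K ∧ ∀ v, ‖v‖ ≤ K * nn v := by
  have : ProperSpace A := FiniteDimensional.proper ℂ A
  have hpos : ∀ u ∈ Metric.sphere (0 : A) 1, 0 < nn u := fun u hu =>
    (h.1 u).lt_of_ne' fun h0 => ne_zero_of_mem_unit_sphere ⟨u, hu⟩ ((h.2.1 u).1 h0)
  obtain ⟨k, hk, hkle⟩ :=
    (isCompact_sphere (0 : A) 1).exists_forall_le' h.continuous.continuousOn hpos
  refine ⟨k⁻¹, inv_pos.2 hk, fun v => ?_⟩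
  rcases eq_or_ne v 0 with rfl | hv
  · simp [(h.2.1 0).2 rfl]
  · have hv' : 0 < ‖v‖ := norm_pos_iff.2 hv
    have hsph : ‖v‖⁻¹ • v ∈ Metric.sphere (0 : A) 1 := by
      simp [norm_smul, hv'.ne']
    have hkv := hkle _ hsph
    rw [← h.coe_toSeminorm, map_smul_eq_mul, norm_inv, norm_norm, le_inv_mul_iff₀ hv'] at hkv
    rwa [le_inv_mul_iff₀ hk, mul_comm]

lemma IsNormOn.exists_le_mul (hnn : IsNormOn A nn) (hmm : IsNormOn A mm) :
    ∃ K, 0 < K ∧ ∀ v, mm v ≤ K * nn v := by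
  obtain ⟨K₁, hK₁, h₁⟩ := hmm.exists_le_mul_norm
  obtain ⟨K₂, hK₂, h₂⟩ := hnn.exists_norm_le_mul
  refine ⟨K₁ * K₂, by positivity, fun v => ?_⟩
  calc mm v ≤ K₁ * ‖v‖ := h₁ v
    _ ≤ K₁ * (K₂ * nn v) := by gcongr; exact h₂ v
    _ = K₁ * K₂ * nn v := by ring

end NormEquivalence

section Lipschitz

variable {X : Type*} [MetricSpace X] {A : Type*} [NormedRing A] {nn mm : A → ℝ}

lemma ofReal_div_dist_le_lipn (a : C(X, A)) {x y : X} (hxy : x ≠ y) :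
    ENNReal.ofReal (nn (a x - a y) / dist x y) ≤ lipn nn a :=
  le_iSup₂ (f := fun (p : X × X) (_ : p.1 ≠ p.2) =>
    ENNReal.ofReal (nn (a p.1 - a p.2) / dist p.1 p.2)) (x, y) hxy

lemma ofReal_le_dist_mul_lipn (h0 : nn 0 = 0) (a : C(X, A)) (x y : X) :
    ENNReal.ofReal (nn (a x - a y)) ≤ ENNReal.ofReal (dist x y) * lipn nn a := by
  rcases eq_or_ne x y with rfl | hxy
  · simp [h0]
  · have hd : 0 < dist x y := dist_pos.2 hxy
    calc ENNReal.ofReal (nn (a x - a y))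
        = ENNReal.ofReal (dist x y) * ENNReal.ofReal (nn (a x - a y) / dist x y) := by
          rw [← ENNReal.ofReal_mul hd.le, mul_div_cancel₀ _ hd.ne']
      _ ≤ ENNReal.ofReal (dist x y) * lipn nn a := by
          gcongr; exact ofReal_div_dist_le_lipn a hxy

lemma lipn_le_ofReal_mul_lipn {K : ℝ} (hK : 0 ≤ K) (hle : ∀ v, mm v ≤ K * nn v)
    (a : C(X, A)) : lipn mm a ≤ ENNReal.ofReal K * lipn nn a := by
  refine iSup₂_le fun p hp => ?_
  calc ENNReal.ofReal (mm (a p.1 - a p.2) / dist p.1 p.2)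
      ≤ ENNReal.ofReal (K * (nn (a p.1 - a p.2) / dist p.1 p.2)) := by
        rw [mul_div_assoc']
        gcongr
        exact hle _
    _ ≤ ENNReal.ofReal K * lipn nn a := by
        rw [ENNReal.ofReal_mul hK]
        gcongr
        exact ofReal_div_dist_le_lipn a hp

end Lipschitz

section Quotient

variable {X : Type*} [MetricSpace X] [CompactSpace X] {A : Type*} [NormedRing A]
  [NormedAlgebra ℂ A]

lemma quotC_le_norm_sub (a : C(X, A)) (c : ℂ) : quotC a ≤ ‖a - c • (1 : C(X, A))‖ :=
  ciInf_le ⟨0, fun _ ⟨_, hc⟩ => hc ▸ norm_nonneg _⟩ c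

lemma quotCXA_le_norm_sub (a b : C(X, A)) (hb : ∀ x, ∃ c : ℂ, b x = c • (1 : A)) :
    quotCXA a ≤ ‖a - b‖ :=
  csInf_le ⟨0, fun _ ⟨_, _, hr⟩ => hr ▸ norm_nonneg _⟩ ⟨b, hb, rfl⟩

lemma quotCXA_le_quotC (a : C(X, A)) : quotCXA a ≤ quotC a :=
  le_ciInf fun c => quotCXA_le_norm_sub a _ fun _ => ⟨c, by simp⟩

lemma quotC_le_quotCXA_add (a : C(X, A)) {δ : ℝ} (hδ : 0 ≤ δ)
    (hosc : ∀ x y, ‖a x - a y‖ ≤ δ) : quotC a ≤ quotCXA a + δ := by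
  rw [← sub_le_iff_le_add]
  refine le_csInf ⟨_, 0, fun _ => ⟨0, by simp⟩, rfl⟩ fun _ ⟨b, hb, hr⟩ =>
    hr ▸ sub_le_iff_le_add.2 ?_
  rcases isEmpty_or_nonempty X with hX | ⟨⟨x₀⟩⟩
  · calc quotC a ≤ ‖a - (0 : ℂ) • (1 : C(X, A))‖ := quotC_le_norm_sub a 0
      _ = 0 := by rw [norm_eq_zero]; ext x; exact isEmptyElim x
      _ ≤ ‖a - b‖ + δ := by positivity
  · obtain ⟨c₀, hc₀⟩ := hb x₀
    -- compare with the constant `b x₀`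
    refine (quotC_le_norm_sub a c₀).trans <|
      (ContinuousMap.norm_le _ (by positivity)).2 fun x => ?_
    calc ‖(a - c₀ • (1 : C(X, A))) x‖ = ‖(a x - a x₀) + (a - b) x₀‖ := by
          simp [← hc₀]
      _ ≤ ‖a x - a x₀‖ + ‖(a - b) x₀‖ := norm_add_le _ _
      _ ≤ δ + ‖a - b‖ := add_le_add (hosc x x₀) ((a - b).norm_coe_le_norm x₀)
      _ = ‖a - b‖ + δ := add_comm _ _

lemma norm_apply_le_opNorm_mul_quotC {E : Type*} [SeminormedAddCommGroup E] [NormedSpace ℂ E]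
    (T : C(X, A) →L[ℂ] E) (hT : T 1 = 0) (a : C(X, A)) : ‖T a‖ ≤ ‖T‖ * quotC a := by
  rw [quotC, Real.mul_iInf_of_nonneg (norm_nonneg T)]
  refine le_ciInf fun c => ?_
  calc ‖T a‖ = ‖T (a - c • 1)‖ := by simp [hT]
    _ ≤ ‖T‖ * ‖a - c • 1‖ := T.le_opNorm _

end Quotient

lemma ENNReal.max_le_ofReal_max_mul {x y z : ℝ≥0∞} {C D : ℝ}
    (hx : x ≤ ENNReal.ofReal C * z) (hy : y ≤ ENNReal.ofReal D * z) :
    max x y ≤ ENNReal.ofReal (max C D) * z := by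
  refine max_le (hx.trans ?_) (hy.trans ?_) <;> gcongr
  exacts [le_max_left _ _, le_max_right _ _]

lemma ENNReal.ofReal_inv_mul_le {x y : ℝ≥0∞} {C : ℝ} (hC : 0 < C)
    (h : x ≤ ENNReal.ofReal C * y) : ENNReal.ofReal C⁻¹ * x ≤ y :=
  calc ENNReal.ofReal C⁻¹ * x ≤ ENNReal.ofReal C⁻¹ * (ENNReal.ofReal C * y) := by gcongr
    _ = y := by rw [← mul_assoc, ← ENNReal.ofReal_mul (by positivity), inv_mul_cancel₀ hC.ne',
      ENNReal.ofReal_one, one_mul]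

section Seminorms

variable {X : Type*} [MetricSpace X] [CompactSpace X] {A : Type*} [NormedRing A]
  [NormedAlgebra ℂ A] {nn mm : A → ℝ}

lemma ofReal_quotC_le_ofReal_quotCXA_add (a : C(X, A)) {δ : ℝ≥0∞}
    (hosc : ∀ x y, ENNReal.ofReal ‖a x - a y‖ ≤ δ) :
    ENNReal.ofReal (quotC a) ≤ ENNReal.ofReal (quotCXA a) + δ := by
  rcases eq_or_ne δ ⊤ with rfl | hδ
  · simp
  have hq := quotC_le_quotCXA_add a ENNReal.toReal_nonneg
    fun x y => (ENNReal.ofReal_le_iff_le_toReal hδ).1 (hosc x y)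
  calc ENNReal.ofReal (quotC a) ≤ ENNReal.ofReal (quotCXA a + δ.toReal) :=
        ENNReal.ofReal_le_ofReal hq
    _ ≤ ENNReal.ofReal (quotCXA a) + δ :=
        ENNReal.ofReal_add_le.trans_eq (by rw [ENNReal.ofReal_toReal hδ])

lemma ofReal_quotC_le_mul_LCXn {K : ℝ} (hK : 0 ≤ K) (hle : ∀ v, ‖v‖ ≤ K * nn v)
    (a : C(X, A)) :
    ENNReal.ofReal (quotC a) ≤
      ENNReal.ofReal (1 + Metric.diam (Set.univ : Set X) * K) * LCXn nn a := by
  set D := Metric.diam (Set.univ : Set X)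
  have hD : 0 ≤ D := Metric.diam_nonneg
  have hosc : ∀ x y, ENNReal.ofReal ‖a x - a y‖ ≤ ENNReal.ofReal (D * K) * LCXn nn a :=
    fun x y => calc
      ENNReal.ofReal ‖a x - a y‖ ≤ ENNReal.ofReal (dist x y) * lipn (‖·‖) a :=
        ofReal_le_dist_mul_lipn (norm_zero (E := A)) a x y
      _ ≤ ENNReal.ofReal D * (ENNReal.ofReal K * lipn nn a) := by
        gcongr
        · exact Metric.dist_le_diam_of_mem isCompact_univ.isBounded trivial trivial
        · exact lipn_le_ofReal_mul_lipn hK hle a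
      _ ≤ ENNReal.ofReal (D * K) * LCXn nn a := by
        rw [← mul_assoc, ← ENNReal.ofReal_mul hD]
        gcongr
        exact le_max_left _ _
  calc ENNReal.ofReal (quotC a)
      ≤ ENNReal.ofReal (quotCXA a) + ENNReal.ofReal (D * K) * LCXn nn a :=
        ofReal_quotC_le_ofReal_quotCXA_add a hosc
    _ ≤ LCXn nn a + ENNReal.ofReal (D * K) * LCXn nn a := by
        gcongr
        exact le_max_right _ _
    _ = ENNReal.ofReal (1 + D * K) * LCXn nn a := by
        rw [ENNReal.ofReal_add zero_le_one (by positivity), ENNReal.ofReal_one, add_mul, one_mul]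

lemma LCXn_le_of_cases {L : C(X, A) → ℝ≥0∞} [StarRing A] [ContinuousStar A]
    (hL : L = LCXn nn ∨ L = LCn nn ∨
      ∃ μ : C(X, A) →L[ℂ] ℂ, IsState μ ∧ L = Lmun nn μ)
    (a : C(X, A)) : LCXn nn a ≤ L a := by
  rcases hL with rfl | rfl | ⟨μ, -, rfl⟩
  · exact le_rfl
  · exact max_le_max le_rfl (ENNReal.ofReal_le_ofReal (quotCXA_le_quotC a))
  · exact max_le_max le_rfl
      (ENNReal.ofReal_le_ofReal ((quotCXA_le_quotC a).trans (quotC_le_norm_sub a (μ a))))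

lemma exists_le_ofReal_mul_LCXn [FiniteDimensional ℂ A] [StarRing A] [ContinuousStar A]
    {L : C(X, A) → ℝ≥0∞} (hnn : IsNormOn A nn)
    (hL : L = LCXn nn ∨ L = LCn nn ∨
      ∃ μ : C(X, A) →L[ℂ] ℂ, IsState μ ∧ L = Lmun nn μ) :
    ∃ C, 0 < C ∧ ∀ a, L a ≤ ENNReal.ofReal C * LCXn nn a := by
  obtain ⟨K, hK, hle⟩ := hnn.exists_norm_le_mul
  set C := 1 + Metric.diam (Set.univ : Set X) * K
  have hquotC := ofReal_quotC_le_mul_LCXn (X := X) hK.le hle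
  have hlipn : ∀ a : C(X, A), lipn nn a ≤ ENNReal.ofReal 1 * LCXn nn a := fun a => by
    rw [ENNReal.ofReal_one, one_mul]; exact le_max_left _ _
  rcases hL with rfl | rfl | ⟨μ, hμ, rfl⟩
  · exact ⟨1, one_pos, fun a => by rw [ENNReal.ofReal_one, one_mul]⟩
  · refine ⟨max 1 C, lt_max_of_lt_left one_pos, fun a => ?_⟩
    exact ENNReal.max_le_ofReal_max_mul (hlipn a) (hquotC a)
  · set T := ContinuousLinearMap.id ℂ C(X, A) - μ.smulRight (1 : C(X, A))
    have hT : T 1 = 0 := by simp [T, hμ.1]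
    refine ⟨max 1 (‖T‖ * C), lt_max_of_lt_left one_pos, fun a => ?_⟩
    refine ENNReal.max_le_ofReal_max_mul (hlipn a) ?_
    calc ENNReal.ofReal ‖a - μ a • 1‖ = ENNReal.ofReal ‖T a‖ := by simp [T]
      _ ≤ ENNReal.ofReal ‖T‖ * ENNReal.ofReal (quotC a) := by
        rw [← ENNReal.ofReal_mul (norm_nonneg T)]
        exact ENNReal.ofReal_le_ofReal (norm_apply_le_opNorm_mul_quotC T hT a)
      _ ≤ ENNReal.ofReal ‖T‖ * (ENNReal.ofReal C * LCXn nn a) := by gcongr; exact hquotC a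
      _ = ENNReal.ofReal (‖T‖ * C) * LCXn nn a := by
        rw [← mul_assoc, ← ENNReal.ofReal_mul (norm_nonneg T)]

lemma exists_LCXn_le_ofReal_mul_LCXn [FiniteDimensional ℂ A] (hnn : IsNormOn A nn)
    (hmm : IsNormOn A mm) :
    ∃ C, 0 < C ∧ ∀ a : C(X, A), LCXn mm a ≤ ENNReal.ofReal C * LCXn nn a := by
  obtain ⟨K, hK, hle⟩ := hnn.exists_le_mul hmm
  refine ⟨max K 1, lt_max_of_lt_right one_pos, fun a => ?_⟩
  refine ENNReal.max_le_ofReal_max_mul ((lipn_le_ofReal_mul_lipn hK.le hle a).trans ?_) ?_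
  · gcongr
    exact le_max_left _ _
  · rw [ENNReal.ofReal_one, one_mul]
    exact le_max_right _ _

end Seminorms

theorem statement14_general
    (X : Type*) [MetricSpace X] [CompactSpace X]
    (A : Type*) [NormedRing A] [StarRing A] [CStarRing A]
      [NormedAlgebra ℂ A]
    [FiniteDimensional ℂ A]
    (nn mm : A → ℝ) (hnn : IsNormOn A nn) (hmm : IsNormOn A mm)
    (L₁ L₂ : C(X, A) → ℝ≥0∞)
    (hL₁ : L₁ = LCXn nn ∨ L₁ = LCn nn ∨
      ∃ μ : C(X, A) →L[ℂ] ℂ, IsState μ ∧ L₁ = Lmun nn μ)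
    (hL₂ : L₂ = LCXn mm ∨ L₂ = LCn mm ∨
      ∃ μ : C(X, A) →L[ℂ] ℂ, IsState μ ∧ L₂ = Lmun mm μ) :
    ∃ c C : ℝ, 0 < c ∧ 0 < C ∧ ∀ a : C(X, A), IsSelfAdjoint a →
      ENNReal.ofReal c * L₁ a ≤ L₂ a ∧ L₂ a ≤ ENNReal.ofReal C * L₁ a := by
  obtain ⟨C₁, hC₁, hL₁le⟩ := exists_le_ofReal_mul_LCXn hnn hL₁
  obtain ⟨C₂, hC₂, hL₂le⟩ := exists_le_ofReal_mul_LCXn hmm hL₂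
  obtain ⟨K, hK, hmn⟩ := exists_LCXn_le_ofReal_mul_LCXn (X := X) hnn hmm
  obtain ⟨K', hK', hnm⟩ := exists_LCXn_le_ofReal_mul_LCXn (X := X) hmm hnn
  refine ⟨(C₁ * K')⁻¹, C₂ * K, by positivity, by positivity, fun a _ => ⟨?_, ?_⟩⟩
  · refine ENNReal.ofReal_inv_mul_le (by positivity) ?_
    calc L₁ a ≤ ENNReal.ofReal C₁ * LCXn nn a := hL₁le a
      _ ≤ ENNReal.ofReal C₁ * (ENNReal.ofReal K' * LCXn mm a) := by gcongr; exact hnm a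
      _ ≤ ENNReal.ofReal (C₁ * K') * L₂ a := by
        rw [← mul_assoc, ← ENNReal.ofReal_mul hC₁.le]
        gcongr
        exact LCXn_le_of_cases hL₂ a
  · calc L₂ a ≤ ENNReal.ofReal C₂ * LCXn mm a := hL₂le a
      _ ≤ ENNReal.ofReal C₂ * (ENNReal.ofReal K * LCXn nn a) := by gcongr; exact hmn a
      _ ≤ ENNReal.ofReal (C₂ * K) * L₁ a := by
        rw [← mul_assoc, ← ENNReal.ofReal_mul hC₂.le]
        gcongr
        exact LCXn_le_of_cases hL₁ a

/-- for a finite-dimensional `A`, any two of the seminorms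
`L^{(n),q}` and `L^{(m),p}` (with `q, p` among `C(X)`, `ℂ`, or a state `μ`) are
equivalent on self-adjoint elements. -/
theorem statement14
    (X : Type*) [MetricSpace X] [CompactSpace X]
    (A : Type*) [NormedRing A] [StarRing A] [CStarRing A]
      [NormedAlgebra ℂ A] [StarModule ℂ A] [CompleteSpace A]
    [FiniteDimensional ℂ A]
    (nn mm : A → ℝ) (hnn : IsNormOn A nn) (hmm : IsNormOn A mm)
    (L₁ L₂ : C(X, A) → ℝ≥0∞)
    (hL₁ : L₁ = LCXn nn ∨ L₁ = LCn nn ∨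
      ∃ μ : C(X, A) →L[ℂ] ℂ, IsState μ ∧ L₁ = Lmun nn μ)
    (hL₂ : L₂ = LCXn mm ∨ L₂ = LCn mm ∨
      ∃ μ : C(X, A) →L[ℂ] ℂ, IsState μ ∧ L₂ = Lmun mm μ) :
    ∃ c C : ℝ, 0 < c ∧ 0 < C ∧ ∀ a : C(X, A), IsSelfAdjoint a →
      ENNReal.ofReal c * L₁ a ≤ L₂ a ∧ L₂ a ≤ ENNReal.ofReal C * L₁ a :=
  statement14_general X A nn mm hnn hmm L₁ L₂ hL₁ hL₂
end

section
/- Let (X, d_X) be a compact metric space and A = ⊕_{k=0}^n M_{m_k}(ℂ). Let ‖·‖_𝗇 be a norm on A with constants M, N > 0 satisfying M‖·‖_𝗇 ≤ ‖·‖_A ≤ N‖·‖_𝗇, and let tr_v be the tracial state associated to v = (v_0,…,v_n) with v_k ∈ [0,1] and Σ v_k = 1. Then for the seminorm L^{(𝗇),ℂ} and all x, y ∈ X: (a) if M·diam(X,d_X) ≤ 1, then M·d_X(x,y) ≤ mk_{L^{(𝗇),ℂ}}((tr_v)_x, (tr_v)_y) ≤ N·d_X(x,y); (b) if M·diam(X,d_X)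 > 1, then (1/diam(X,d_X))·d_X(x,y) ≤ mk_{L^{(𝗇),ℂ}}((tr_v)_x, (tr_v)_y) ≤ N·d_X(x,y). -/
open scoped ENNReal
set_option synthInstance.maxHeartbeats 1000000
set_option maxHeartbeats 1000000

open scoped Matrix.Norms.L2Operator

section MatrixDefs

variable {n : ℕ} {m : Fin (n + 1) → ℕ}

/-- The matrix unit `e_{k,(p,q)}` of `⊕_k M_{m_k}(ℂ)`. -/
noncomputable def matUnit (k : Fin (n + 1)) (p q : Fin (m k)) :
    Π j : Fin (n + 1), Matrix (Fin (m j)) (Fin (m j)) ℂ :=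
  Pi.single k (Matrix.single p q 1)

/-- The constant `k_μ = Σ_k Σ_{p,q} |μ(e_{k,(p,q)})|` associated to a state `μ`. -/
noncomputable def kConst
    (μ : (Π j : Fin (n + 1), Matrix (Fin (m j)) (Fin (m j)) ℂ) →L[ℂ] ℂ) : ℝ :=
  ∑ k : Fin (n + 1), ∑ p : Fin (m k), ∑ q : Fin (m k), ‖μ (matUnit k p q)‖

/-- The functional `μ_x : a ↦ μ (a x)` on `C(X, ⊕_k M_{m_k}(ℂ))`. -/
noncomputable def stateAt {X : Type*} [MetricSpace X] [CompactSpace X]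
    (μ : (Π j : Fin (n + 1), Matrix (Fin (m j)) (Fin (m j)) ℂ) →L[ℂ] ℂ) (x : X) :
    C(X, Π j : Fin (n + 1), Matrix (Fin (m j)) (Fin (m j)) ℂ) →L[ℂ] ℂ :=
  μ.comp (ContinuousMap.evalCLM ℂ x)

/-- The tracial state `tr_v = ⊕_k v_k tr_{m_k}` on `⊕_k M_{m_k}(ℂ)`. -/
noncomputable def trV (v : Fin (n + 1) → ℝ) :
    (Π j : Fin (n + 1), Matrix (Fin (m j)) (Fin (m j)) ℂ) →L[ℂ] ℂ :=
  LinearMap.toContinuousLinearMap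
    { toFun := fun a => ∑ k : Fin (n + 1), ((v k : ℂ) / (m k : ℂ)) * (a k).trace
      map_add' := by
        intro a b
        simp [Matrix.trace_add, mul_add, Finset.sum_add_distrib]
      map_smul' := by
        intro c a
        simp only [Pi.smul_apply, Matrix.trace_smul, smul_eq_mul, RingHom.id_apply,
          Finset.mul_sum]
        exact Finset.sum_congr rfl fun k _ => by ring }

end MatrixDefs

/-! The upper bound holds because `tr_v` is a contraction, so `|tr_v(a x) - tr_v(a y)|` is at most
`‖a x - a y‖ ≤ N‖a x - a y‖_𝗇 ≤ N d(x, y)` whenever `L(a) ≤ 1`. For the lower bound one tests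
against `a = K d(·, y) 1_A`: its Lipschitz constant is `K‖1_A‖_𝗇 ≤ K / M`, its distance to the
scalars is at most `K diam(X) / 2`, and `tr_v(a x) - tr_v(a y) = K d(x, y)`. The largest admissible
`K` is `M` when `M diam(X) ≤ 1`, and `1 / diam(X)` otherwise. -/

lemma CStarRing.norm_one_le_one {E : Type*} [NormedRing E] [StarRing E] [CStarRing E] :
    ‖(1 : E)‖ ≤ 1 := by
  have h : ‖(1 : E)‖ = ‖(1 : E)‖ * ‖(1 : E)‖ := by
    simpa using (CStarRing.norm_star_mul_self (x := (1 : E)))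
  nlinarith [norm_nonneg (1 : E)]

namespace Matrix

variable {𝕜 : Type*} [RCLike 𝕜] {l p : Type*} [Fintype l] [Fintype p] [DecidableEq p]

lemma norm_entry_le_l2_opNorm (b : Matrix l p 𝕜) (i : l) (j : p) : ‖b i j‖ ≤ ‖b‖ := by
  have h := b.l2_opNorm_mulVec (EuclideanSpace.single j 1)
  rw [PiLp.norm_single, norm_one, mul_one] at h
  refine le_trans (le_of_eq ?_) ((PiLp.norm_apply_le _ i).trans h)
  simp [mulVec_single]

lemma norm_trace_le_l2_opNorm (b : Matrix p p 𝕜) : ‖b.trace‖ ≤ Fintype.card p * ‖b‖ :=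
  calc ‖b.trace‖ ≤ ∑ i, ‖b i i‖ := norm_sum_le _ _
    _ ≤ ∑ _i : p, ‖b‖ := Finset.sum_le_sum fun i _ => norm_entry_le_l2_opNorm b i i
    _ = Fintype.card p * ‖b‖ := by simp

end Matrix

section TracialState

variable {n : ℕ} {m : Fin (n + 1) → ℕ}

lemma trV_apply (v : Fin (n + 1) → ℝ) (a : Π j, Matrix (Fin (m j)) (Fin (m j)) ℂ) :
    trV v a = ∑ k, ((v k : ℂ) / (m k : ℂ)) * (a k).trace := rfl

lemma trV_one (hm : ∀ k, 0 < m k) {v : Fin (n + 1) → ℝ} (hv1 : ∑ k, v k = 1) :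
    trV v (1 : Π j, Matrix (Fin (m j)) (Fin (m j)) ℂ) = 1 := by
  have hterm : ∀ k, ((v k : ℂ) / (m k : ℂ)) * (1 : Matrix (Fin (m k)) (Fin (m k)) ℂ).trace
      = v k := fun k => by
    have : (m k : ℂ) ≠ 0 := Nat.cast_ne_zero.mpr (hm k).ne'
    rw [Matrix.trace_one, Fintype.card_fin]
    field_simp
  rw [trV_apply]
  simp only [Pi.one_apply, hterm]
  exact_mod_cast hv1

lemma opNorm_trV_le {v : Fin (n + 1) → ℝ} (hv : ∀ k, 0 ≤ v k) (hv1 : ∑ k, v k = 1) :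
    ‖(trV v : (Π j, Matrix (Fin (m j)) (Fin (m j)) ℂ) →L[ℂ] ℂ)‖ ≤ 1 := by
  refine ContinuousLinearMap.opNorm_le_bound _ zero_le_one fun a => ?_
  have hterm : ∀ k, ‖((v k : ℂ) / (m k : ℂ)) * (a k).trace‖ ≤ v k * ‖a‖ := fun k => by
    have hcoef : ‖((v k : ℂ) / (m k : ℂ))‖ = v k / m k := by
      rw [norm_div, Complex.norm_real, Complex.norm_natCast, Real.norm_of_nonneg (hv k)]
    calc ‖((v k : ℂ) / (m k : ℂ)) * (a k).trace‖
        ≤ v k / m k * (m k * ‖a‖) := by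
          rw [norm_mul, hcoef]
          gcongr
          · exact div_nonneg (hv k) (Nat.cast_nonneg _)
          · simpa using (a k).norm_trace_le_l2_opNorm.trans
              (mul_le_mul_of_nonneg_left (norm_le_pi_norm a k) (Nat.cast_nonneg _))
      _ = v k * ‖a‖ * (m k / m k) := by ring
      _ ≤ v k * ‖a‖ :=
          mul_le_of_le_one_right (mul_nonneg (hv k) (norm_nonneg a)) (div_self_le_one _)
  calc ‖trV v a‖ ≤ ∑ k, v k * ‖a‖ := (norm_sum_le _ _).trans (Finset.sum_le_sum fun k _ => hterm k)
    _ = 1 * ‖a‖ := by rw [← Finset.sum_mul, hv1]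

end TracialState

lemma le_mkDist {B : Type*} [NormedRing B] [NormedAlgebra ℂ B] [StarRing B]
    {L : B → ℝ≥0∞} {φ ψ : B →L[ℂ] ℂ} {a : B} (ha : IsSelfAdjoint a) (hL : L a ≤ 1) :
    ENNReal.ofReal ‖φ a - ψ a‖ ≤ mkDist L φ ψ :=
  le_iSup₂ (f := fun (b : B) (_ : IsSelfAdjoint b ∧ L b ≤ 1) => ENNReal.ofReal ‖φ b - ψ b‖)
    a ⟨ha, hL⟩

lemma mkDist_le_ofReal {B : Type*} [NormedRing B] [NormedAlgebra ℂ B] [StarRing B]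
    {L : B → ℝ≥0∞} {φ ψ : B →L[ℂ] ℂ} {r : ℝ}
    (h : ∀ a, IsSelfAdjoint a → L a ≤ 1 → ‖φ a - ψ a‖ ≤ r) :
    mkDist L φ ψ ≤ ENNReal.ofReal r :=
  iSup₂_le fun a ha => ENNReal.ofReal_le_ofReal (h a ha.1 ha.2)

section LipschitzSeminorm

variable {X : Type*} [MetricSpace X] {A : Type*} [NormedRing A]

lemma lipn_le_ofReal_iff {nn : A → ℝ} {a : C(X, A)} {C : ℝ} (hC : 0 ≤ C) :
    lipn nn a ≤ ENNReal.ofReal C ↔ ∀ x y, x ≠ y → nn (a x - a y) ≤ C * dist x y := by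
  simp only [lipn, iSup₂_le_iff, ENNReal.ofReal_le_ofReal_iff hC, Prod.forall]
  exact forall₂_congr fun x y => imp_congr_right fun hxy => div_le_iff₀ (dist_pos.mpr hxy)

variable [NormedAlgebra ℂ A]

def realSmulOne (f : C(X, ℝ)) : C(X, A) :=
  ⟨fun z => (f z : ℂ) • (1 : A), by fun_prop⟩

@[simp]
lemma realSmulOne_apply (f : C(X, ℝ)) (z : X) : realSmulOne (A := A) f z = (f z : ℂ) • 1 := rfl

lemma isSelfAdjoint_realSmulOne [StarRing A] [ContinuousStar A] [StarModule ℂ A]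
    (f : C(X, ℝ)) : IsSelfAdjoint (realSmulOne (A := A) f) :=
  ContinuousMap.ext fun z => by simp [star_smul]

lemma lipn_realSmulOne_le {nn : A → ℝ} (hnn : IsNormOn A nn) {f : C(X, ℝ)} {K : ℝ}
    (hK : 0 ≤ K) (hf : ∀ z w, |f z - f w| ≤ K * dist z w) :
    lipn nn (realSmulOne f) ≤ ENNReal.ofReal (K * nn 1) := by
  refine (lipn_le_ofReal_iff (mul_nonneg hK (hnn.1 1))).mpr fun z w _ => ?_
  calc nn (realSmulOne f z - realSmulOne f w) = |f z - f w| * nn 1 := by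
        rw [realSmulOne_apply, realSmulOne_apply, ← sub_smul, ← Complex.ofReal_sub, hnn.2.2.2]
    _ ≤ K * dist z w * nn 1 := mul_le_mul_of_nonneg_right (hf z w) (hnn.1 1)
    _ = K * nn 1 * dist z w := by ring

lemma quotC_realSmulOne_le [CompactSpace X] [Nonempty X] [StarRing A] [CStarRing A]
    {f : C(X, ℝ)} {c : ℝ} (hf : ∀ z, 0 ≤ f z ∧ f z ≤ c) :
    quotC (realSmulOne (A := A) f) ≤ c / 2 := by
  have hc : 0 ≤ c / 2 := by
    obtain ⟨z⟩ := ‹Nonempty X›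
    linarith [hf z]
  refine (ciInf_le ⟨0, ?_⟩ ((c / 2 : ℝ) : ℂ)).trans
    ((ContinuousMap.norm_le _ hc).mpr fun z => ?_)
  · rintro r ⟨d, rfl⟩
    exact norm_nonneg _
  · have hz : (realSmulOne (A := A) f - ((c / 2 : ℝ) : ℂ) • (1 : C(X, A))) z
        = ((f z - c / 2 : ℝ) : ℂ) • 1 := by
      simp [sub_smul]
    rw [hz, norm_smul, Complex.norm_real, Real.norm_eq_abs]
    calc |f z - c / 2| * ‖(1 : A)‖ ≤ c / 2 * 1 :=
          mul_le_mul (abs_le.mpr ⟨by linarith [hf z], by linarith [hf z]⟩)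
            CStarRing.norm_one_le_one (norm_nonneg _) hc
      _ = c / 2 := mul_one _

end LipschitzSeminorm

section MongeKantorovich

variable {X : Type*} [MetricSpace X] [CompactSpace X] {A : Type*} [NormedRing A]
  [NormedAlgebra ℂ A] [StarRing A] {nn : A → ℝ} {μ : A →L[ℂ] ℂ}

lemma mkDist_LCn_comp_evalCLM_le [ContinuousStar A] {N : ℝ} (hN : 0 ≤ N)
    (hnorm : ∀ b, ‖b‖ ≤ N * nn b) (hμ : ‖μ‖ ≤ 1) (x y : X) :
    mkDist (LCn nn) (μ.comp (ContinuousMap.evalCLM ℂ x)) (μ.comp (ContinuousMap.evalCLM ℂ y))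
      ≤ ENNReal.ofReal (N * dist x y) := by
  refine mkDist_le_ofReal fun a _ haL => ?_
  simp only [ContinuousLinearMap.comp_apply, ContinuousMap.evalCLM_apply]
  rcases eq_or_ne x y with rfl | hxy
  · simp
  have hlip : nn (a x - a y) ≤ 1 * dist x y := by
    refine (lipn_le_ofReal_iff zero_le_one).mp ?_ x y hxy
    simpa using (le_max_left _ _).trans haL
  calc ‖μ (a x) - μ (a y)‖ = ‖μ (a x - a y)‖ := by rw [map_sub]
    _ ≤ 1 * ‖a x - a y‖ := μ.le_of_opNorm_le hμ _
    _ ≤ N * nn (a x - a y) := by simpa using hnorm (a x - a y)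
    _ ≤ N * dist x y := mul_le_mul_of_nonneg_left (by simpa using hlip) hN

lemma ofReal_mul_dist_le_mkDist_LCn_comp_evalCLM [CStarRing A] [StarModule ℂ A]
    (hnn : IsNormOn A nn) (hμ : μ 1 = 1) {K : ℝ} (hK : 0 ≤ K) (hK1 : K * nn 1 ≤ 1)
    (hKD : K * Metric.diam (Set.univ : Set X) ≤ 2) (x y : X) :
    ENNReal.ofReal (K * dist x y) ≤ mkDist (LCn nn)
      (μ.comp (ContinuousMap.evalCLM ℂ x)) (μ.comp (ContinuousMap.evalCLM ℂ y)) := by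
  have : Nonempty X := ⟨x⟩
  let f : C(X, ℝ) := ⟨fun z => K * dist z y, by fun_prop⟩
  have hf_lip : ∀ z w, |f z - f w| ≤ K * dist z w := fun z w => by
    simp only [f, ContinuousMap.coe_mk, ← mul_sub, abs_mul, abs_of_nonneg hK]
    exact mul_le_mul_of_nonneg_left (abs_dist_sub_le z w y) hK
  have hf_range : ∀ z, 0 ≤ f z ∧ f z ≤ K * Metric.diam (Set.univ : Set X) := fun z =>
    ⟨mul_nonneg hK dist_nonneg, mul_le_mul_of_nonneg_left
      (Metric.dist_le_diam_of_mem isCompact_univ.isBounded trivial trivial) hK⟩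
  have hL : LCn nn (realSmulOne (A := A) f) ≤ 1 :=
    max_le ((lipn_realSmulOne_le hnn hK hf_lip).trans (ENNReal.ofReal_le_one.mpr hK1))
      (ENNReal.ofReal_le_one.mpr ((quotC_realSmulOne_le hf_range).trans (by linarith)))
  have hval : μ.comp (ContinuousMap.evalCLM ℂ x) (realSmulOne f)
      - μ.comp (ContinuousMap.evalCLM ℂ y) (realSmulOne f) = ((K * dist x y : ℝ) : ℂ) := by
    simp [f, hμ]
  calc ENNReal.ofReal (K * dist x y)
      = ENNReal.ofReal ‖μ.comp (ContinuousMap.evalCLM ℂ x) (realSmulOne f)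
          - μ.comp (ContinuousMap.evalCLM ℂ y) (realSmulOne f)‖ := by
        rw [hval, Complex.norm_real, Real.norm_of_nonneg (mul_nonneg hK dist_nonneg)]
    _ ≤ _ := le_mkDist (isSelfAdjoint_realSmulOne f) hL

end MongeKantorovich

/-- bi-Lipschitz bounds for `x ↦ (tr_v)_x` with respect to the
Monge–Kantorovich metric of `L^{(n),ℂ}`, with lower constant depending on
`M·diam(X)`. -/
theorem statement17
    (X : Type*) [MetricSpace X] [CompactSpace X]
    (n : ℕ) (m : Fin (n + 1) → ℕ) (hm : ∀ k, 0 < m k)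
    (nn : (Π j : Fin (n + 1), Matrix (Fin (m j)) (Fin (m j)) ℂ) → ℝ)
    (hnn : IsNormOn _ nn) (M N : ℝ) (hM : 0 < M) (hN : 0 < N)
    (hMN : ∀ a, M * nn a ≤ ‖a‖ ∧ ‖a‖ ≤ N * nn a)
    (v : Fin (n + 1) → ℝ) (hv : ∀ k, 0 ≤ v k ∧ v k ≤ 1) (hv1 : ∑ k, v k = 1) :
    (M * Metric.diam (Set.univ : Set X) ≤ 1 →
      ∀ x y : X,
        ENNReal.ofReal (M * dist x y)
            ≤ mkDist (LCn nn) (stateAt (trV v) x) (stateAt (trV v) y) ∧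
        mkDist (LCn nn) (stateAt (trV v) x) (stateAt (trV v) y)
            ≤ ENNReal.ofReal (N * dist x y)) ∧
    (1 < M * Metric.diam (Set.univ : Set X) →
      ∀ x y : X,
        ENNReal.ofReal ((1 / Metric.diam (Set.univ : Set X)) * dist x y)
            ≤ mkDist (LCn nn) (stateAt (trV v) x) (stateAt (trV v) y) ∧
        mkDist (LCn nn) (stateAt (trV v) x) (stateAt (trV v) y)
            ≤ ENNReal.ofReal (N * dist x y)) := by
  have hM1 : M * nn 1 ≤ 1 := (hMN 1).1.trans CStarRing.norm_one_le_one
  have upper : ∀ x y : X, mkDist (LCn nn) (stateAt (trV v) x) (stateAt (trV v) y)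
      ≤ ENNReal.ofReal (N * dist x y) :=
    mkDist_LCn_comp_evalCLM_le hN.le (fun a => (hMN a).2) (opNorm_trV_le (fun k => (hv k).1) hv1)
  have lower {K : ℝ} (hK : 0 ≤ K) (hK1 : K * nn 1 ≤ 1)
      (hKD : K * Metric.diam (Set.univ : Set X) ≤ 2) (x y : X) :
      ENNReal.ofReal (K * dist x y) ≤ mkDist (LCn nn) (stateAt (trV v) x) (stateAt (trV v) y) :=
    ofReal_mul_dist_le_mkDist_LCn_comp_evalCLM hnn (trV_one hm hv1) hK hK1 hKD x y
  refine ⟨fun hMD x y => ⟨lower hM.le hM1 (by linarith) x y, upper x y⟩,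
    fun hMD x y => ⟨?_, upper x y⟩⟩
  set D := Metric.diam (Set.univ : Set X)
  have hD : 0 < D := pos_of_mul_pos_right (one_pos.trans hMD) hM.le
  have hnnD : nn 1 ≤ D := le_of_mul_le_mul_left (hM1.trans hMD.le) hM
  refine lower (by positivity) ?_ ?_ x y
  · rwa [one_div_mul_eq_div, div_le_one hD]
  · rw [one_div_mul_eq_div, div_self hD.ne']
    norm_num
end
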